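/- (Lemma 2, case (ii)) Let k ∈ ℝ and x ∈ [0,1). There exists n₀ ∈ ℕ such that for all n ≥ n₀ with x + r_n(x,k) ∈ [2/3, 5/3), Δ_n(x,k) = c_n(0,x) − ∫₀¹ c_n(v,x) dv + (x − 2/3)·((n+1+x)/(n+2) − c_n(0,x)) + ((n+1+x)/(n+2))·r_{n+1}(x,k) − c_n(0,x)·r_n(x,k). -/

import Mathlib

open MeasureTheory ProbabilityTheory Filter Real Set
open scoped ENNReal NNReal

/-- Distribution of `Z_λ = N_λ + U`, `N_λ` Poisson(λ), `U` uniform on `(0,1)`, independent. -/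
noncomputable def zMeasure (l : ℝ) : Measure ℝ :=
  Measure.map (fun p : ℝ × ℝ => p.1 + p.2)
    ((Measure.map (Nat.cast : ℕ → ℝ) (poissonMeasure l.toNNReal)).prod
      (volume.restrict (Set.Ioo (0 : ℝ) 1)))

/-- The median of `Z_λ`: `inf {t : P(Z_λ ≤ t) ≥ 1/2}`. -/
noncomputable def medianZ (l : ℝ) : ℝ :=
  sInf {t : ℝ | (1 : ℝ≥0∞) / 2 ≤ zMeasure l (Set.Iic t)}

/-- The function `H` of the main theorem. -/
noncomputable def Hfun (x : ℝ) : ℝ :=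
  if x ≤ 2 / 3 then x ^ 2 * (x - 1) / 3 + 4 / 135
  else x / 3 * (x ^ 2 - 4 * x + 5) - 86 / 135

/-- `w_n(x,k) = P(Z_{n+x} ≤ n + x + 1/3 + k/(n+x))`. -/
noncomputable def w (n : ℕ) (x k : ℝ) : ℝ :=
  (zMeasure (n + x) (Set.Iic ((n : ℝ) + x + 1 / 3 + k / (n + x)))).toReal

/-- `r_n(x,k) = k/(n+x)`. -/
noncomputable def r (n : ℕ) (x k : ℝ) : ℝ := k / (n + x)

/-- `g_n(u) = e^{-u} u^n`. -/
noncomputable def g (n : ℕ) (u : ℝ) : ℝ := Real.exp (-u) * u ^ n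

/-- `c_n(v,x) = ((n+v+x)/(n+1+x))^{n+1} e^{1-v}`. -/
noncomputable def c (n : ℕ) (v x : ℝ) : ℝ :=
  (((n : ℝ) + v + x) / ((n : ℝ) + 1 + x)) ^ (n + 1) * Real.exp (1 - v)

/-- `Δ_n(x,k) = ((n+1)!/g_{n+1}(n+1+x)) (w_{n+1}(x,k) - w_n(x,k))`. -/
noncomputable def Δfun (n : ℕ) (x k : ℝ) : ℝ :=
  ((n + 1).factorial : ℝ) / g (n + 1) ((n : ℝ) + 1 + x) * (w (n + 1) x k - w n x k)


/-!
Since `Z_λ = N_λ + U`, its distribution function is piecewise linear: for `m ≤ t < m + 1` it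
is `P(N_λ < m) + P(N_λ = m) (t - m)`. The condition `x + r_n ∈ [2/3, 5/3)` puts the threshold
of `w_n` in `[n + 1, n + 2)`, so `w_n` is explicit. In `w_{n+1} - w_n` the difference of the Poisson
distribution functions at `n + x` and `n + 1 + x` is the incomplete Gamma integral `∫ g_n / n!`;
integrating by parts turns it into `∫ g_{n+1}`, which after the substitution `u = n + v + x`
and division by `g_{n+1}(n + 1 + x)` is `∫₀¹ c_n(v, x) dv`.

For large `n` the condition on `r_n` also holds for `r_{n+1}`, which lies between `0` and `r_n`:
if `x ≥ 2/3` this is convexity of `[2/3, 5/3)`, and if `x < 2/3` the condition eventually fails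
because `r_n → 0`.
-/

open scoped Nat Topology

lemma volume_Iic_inter_Ioo_zero_one (s : ℝ) :
    volume (Iic s ∩ Ioo (0 : ℝ) 1) = ENNReal.ofReal (min 1 s) := by
  rw [← measure_congr ((Iio_ae_eq_Iic (a := s)).inter (ae_eq_refl (Ioo (0 : ℝ) 1))),
    inter_comm, Ioo_inter_Iio, Real.volume_Ioo, sub_zero]

lemma zMeasure_Iic (l t : ℝ) :
    zMeasure l (Iic t)
      = ∑' j : ℕ, ENNReal.ofReal (min 1 (t - j)) * poissonMeasure l.toNNReal {j} := by
  have hcast : Measurable (Nat.cast : ℕ → ℝ) := measurable_from_top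
  have hadd : Measurable (fun p : ℝ × ℝ => p.1 + p.2) := measurable_fst.add measurable_snd
  have hprod := Measure.map_prod_map (poissonMeasure l.toNNReal)
    (volume.restrict (Ioo (0 : ℝ) 1)) hcast measurable_id
  rw [Measure.map_id] at hprod
  have hsum := hadd.comp (hcast.prodMap measurable_id)
  rw [zMeasure, hprod, Measure.map_map hadd (hcast.prodMap measurable_id),
    Measure.map_apply hsum measurableSet_Iic, Measure.prod_apply (hsum measurableSet_Iic),
    lintegral_countable']
  congr 1 with j
  have hslice : Prod.mk j ⁻¹' ((fun p : ℝ × ℝ => p.1 + p.2) ∘ Prod.map Nat.cast id ⁻¹' Iic t)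
      = Iic (t - j) := by
    ext y
    simp only [mem_preimage, Function.comp, Prod.map, id, mem_Iic]
    constructor <;> intro h <;> linarith
  rw [← volume_Iic_inter_Ioo_zero_one, ← Measure.restrict_apply measurableSet_Iic, ← hslice]

lemma zMeasure_Iic_toReal {l t : ℝ} (hl : 0 ≤ l) {m : ℕ} (hmt : (m : ℝ) ≤ t)
    (htm : t < m + 1) :
    (zMeasure l (Iic t)).toReal
      = ∑ j ∈ Finset.range m, g j l / (j)! + g m l / (m)! * (t - m) := by
  have hg : ∀ j : ℕ, 0 ≤ g j l / (j)! := fun j => by unfold g; positivity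
  have hterm : ∀ j : ℕ, ENNReal.ofReal (min 1 (t - j)) * poissonMeasure l.toNNReal {j}
      = ENNReal.ofReal (min 1 (t - j) * (g j l / (j)!)) := by
    intro j
    rw [poissonMeasure_singleton, Real.coe_toNNReal l hl, ENNReal.ofReal_mul' (hg j), g]
  have hvanish : ∀ j ∉ Finset.range (m + 1),
      ENNReal.ofReal (min 1 (t - j) * (g j l / (j)!)) = 0 := by
    intro j hj
    have hjm : (m : ℝ) + 1 ≤ j := by exact_mod_cast not_lt.mp (Finset.mem_range.not.mp hj)
    exact ENNReal.ofReal_of_nonpos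
      (mul_nonpos_of_nonpos_of_nonneg (by linarith [min_le_right 1 (t - j)]) (hg j))
  have hnonneg : ∀ j ∈ Finset.range (m + 1), 0 ≤ min 1 (t - j) * (g j l / (j)!) := by
    intro j hj
    have hjm : (j : ℝ) ≤ m := by exact_mod_cast Finset.mem_range_succ_iff.mp hj
    exact mul_nonneg (le_min zero_le_one (by linarith)) (hg j)
  simp_rw [zMeasure_Iic, hterm]
  rw [tsum_eq_sum hvanish, ← ENNReal.ofReal_sum_of_nonneg hnonneg,
    ENNReal.toReal_ofReal (Finset.sum_nonneg hnonneg), Finset.sum_range_succ,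
    min_eq_right (by linarith : t - m ≤ 1), mul_comm (t - m)]
  congr 1
  refine Finset.sum_congr rfl fun j hj => ?_
  have hjm : (j : ℝ) + 1 ≤ m := by exact_mod_cast Finset.mem_range.mp hj
  rw [min_eq_left (by linarith), one_mul]

lemma continuous_g (n : ℕ) : Continuous (g n) := by
  unfold g
  fun_prop

lemma g_succ (n : ℕ) (u : ℝ) : g (n + 1) u = u * g n u := by
  unfold g
  ring

lemma hasDerivAt_g_succ (n : ℕ) (u : ℝ) :
    HasDerivAt (g (n + 1)) ((n + 1) * g n u - g (n + 1) u) u := by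
  refine (((hasDerivAt_neg u).exp).mul (hasDerivAt_pow (n + 1) u)).congr_deriv ?_
  simp only [g, Nat.add_sub_cancel, Nat.cast_add, Nat.cast_one]
  ring

lemma hasDerivAt_sum_g_div_factorial (m : ℕ) (l : ℝ) :
    HasDerivAt (fun l => ∑ j ∈ Finset.range (m + 1), g j l / (j)!) (-(g m l / (m)!)) l := by
  induction m with
  | zero =>
    simpa [g] using (hasDerivAt_neg l).exp
  | succ m ih =>
    simp_rw [Finset.sum_range_succ (n := m + 1)]
    refine (ih.add ((hasDerivAt_g_succ m l).div_const ((m + 1)! : ℝ))).congr_deriv ?_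
    rw [Nat.factorial_succ]
    push_cast
    field_simp
    ring

lemma sum_g_div_factorial_sub_sum (m : ℕ) (a b : ℝ) :
    ∑ j ∈ Finset.range (m + 1), g j a / (j)! - ∑ j ∈ Finset.range (m + 1), g j b / (j)!
      = (∫ u in a..b, g m u) / (m)! := by
  rw [← intervalIntegral.integral_div, intervalIntegral.integral_eq_sub_of_hasDerivAt
    (fun u _ => by simpa using (hasDerivAt_sum_g_div_factorial m u).neg)
    (((continuous_g m).div_const _).intervalIntegrable a b)]
  simp only [Pi.neg_apply]
  ring

lemma natCast_succ_mul_integral_g (n : ℕ) (a b : ℝ) :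
    (n + 1) * ∫ u in a..b, g n u = (∫ u in a..b, g (n + 1) u) + g (n + 1) b - g (n + 1) a := by
  have hcont : Continuous fun u => ((n : ℝ) + 1) * g n u := (continuous_g n).const_mul _
  have h := intervalIntegral.integral_eq_sub_of_hasDerivAt (fun u _ => hasDerivAt_g_succ n u)
    ((hcont.sub (continuous_g (n + 1))).intervalIntegrable a b)
  rw [intervalIntegral.integral_sub (hcont.intervalIntegrable a b)
    ((continuous_g (n + 1)).intervalIntegrable a b), intervalIntegral.integral_const_mul] at h
  linarith

lemma c_eq_g_div_g (n : ℕ) (v : ℝ) {x : ℝ} (hx : (n : ℝ) + 1 + x ≠ 0) :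
    c n v x = g (n + 1) (n + v + x) / g (n + 1) (n + 1 + x) := by
  unfold c g
  rw [div_pow, show -((n : ℝ) + v + x) = -(n + 1 + x) + (1 - v) by ring, Real.exp_add]
  field_simp

lemma integral_c {n : ℕ} {x : ℝ} (hx : (n : ℝ) + 1 + x ≠ 0) :
    ∫ v in (0 : ℝ)..1, c n v x
      = (∫ u in (n + x : ℝ)..(n + 1 + x), g (n + 1) u) / g (n + 1) (n + 1 + x) := by
  simp_rw [c_eq_g_div_g n _ hx, intervalIntegral.integral_div, add_right_comm (n : ℝ) _ x,
    intervalIntegral.integral_comp_add_left (g (n + 1)), add_zero]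

lemma w_eq_of_mem_Ico {n : ℕ} {x k : ℝ} (hnx : 0 ≤ (n : ℝ) + x)
    (hr : x + r n x k ∈ Ico (2 / 3 : ℝ) (5 / 3)) :
    w n x k = ∑ j ∈ Finset.range (n + 1), g j (n + x) / (j)!
      + g (n + 1) (n + x) / (n + 1)! * (x + r n x k - 2 / 3) := by
  rw [r] at hr
  rw [w, zMeasure_Iic_toReal hnx (m := n + 1) (by push_cast; linarith [hr.1])
    (by push_cast; linarith [hr.2]), r]
  push_cast
  ring

lemma Δfun_eq_of_mem_Ico {n : ℕ} {x k : ℝ} (hnx : 0 ≤ (n : ℝ) + x)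
    (hr : x + r n x k ∈ Ico (2 / 3 : ℝ) (5 / 3))
    (hr' : x + r (n + 1) x k ∈ Ico (2 / 3 : ℝ) (5 / 3)) :
    Δfun n x k
      = c n 0 x - (∫ v in (0 : ℝ)..1, c n v x)
        + (x - 2 / 3) * (((n : ℝ) + 1 + x) / ((n : ℝ) + 2) - c n 0 x)
        + ((n : ℝ) + 1 + x) / ((n : ℝ) + 2) * r (n + 1) x k
        - c n 0 x * r n x k := by
  have hb : (0 : ℝ) < n + 1 + x := by linarith
  have hgb : g (n + 1) (n + 1 + x) ≠ 0 := by unfold g; positivity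
  have hwsucc := w_eq_of_mem_Ico (by push_cast; linarith) hr'
  rw [Nat.cast_succ, Finset.sum_range_succ, g_succ (n + 1)] at hwsucc
  have hsum : ∑ j ∈ Finset.range (n + 1), g j (n + 1 + x) / (j)!
      = ∑ j ∈ Finset.range (n + 1), g j (n + x) / (j)!
        - ((∫ u in (n + x : ℝ)..(n + 1 + x), g (n + 1) u) + g (n + 1) (n + 1 + x)
          - g (n + 1) (n + x)) / (n + 1)! := by
    rw [← natCast_succ_mul_integral_g, eq_sub_iff_add_eq, ← eq_sub_iff_add_eq',
      sum_g_div_factorial_sub_sum, Nat.factorial_succ]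
    push_cast
    field_simp
  rw [Δfun, hwsucc, hsum, w_eq_of_mem_Ico hnx hr, c_eq_g_div_g n 0 hb.ne', integral_c hb.ne',
    add_zero, Nat.factorial_succ (n + 1)]
  push_cast
  field_simp
  ring

lemma tendsto_r_atTop (x k : ℝ) : Tendsto (fun n : ℕ => r n x k) atTop (𝓝 0) :=
  tendsto_const_nhds.div_atTop (tendsto_atTop_add_const_right _ x tendsto_natCast_atTop_atTop)

lemma r_succ_mem_uIcc {n : ℕ} {x : ℝ} (hnx : 0 < (n : ℝ) + x) (k : ℝ) :
    r (n + 1) x k ∈ uIcc 0 (r n x k) := by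
  have hle : (n : ℝ) + x ≤ ↑(n + 1) + x := by push_cast; linarith
  have hpos := hnx.trans_le hle
  rcases le_total 0 k with hk | hk
  · exact Icc_subset_uIcc ⟨div_nonneg hk hpos.le, div_le_div_of_nonneg_left hk hnx hle⟩
  · refine Icc_subset_uIcc' ⟨?_, div_nonpos_of_nonpos_of_nonneg hk hpos.le⟩
    simpa only [r, neg_div, neg_le_neg_iff] using
      div_le_div_of_nonneg_left (neg_nonneg.mpr hk) hnx hle

theorem lemma2_case_ii (k x : ℝ) (hx : x ∈ Set.Ico (0 : ℝ) 1) :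
    ∃ n₀ : ℕ, ∀ n : ℕ, n₀ ≤ n →
      x + r n x k ∈ Set.Ico ((2 : ℝ) / 3) (5 / 3) →
      Δfun n x k
        = c n 0 x - (∫ v in (0 : ℝ)..1, c n v x)
          + (x - 2 / 3) * (((n : ℝ) + 1 + x) / ((n : ℝ) + 2) - c n 0 x)
          + ((n : ℝ) + 1 + x) / ((n : ℝ) + 2) * r (n + 1) x k
          - c n 0 x * r n x k := by
  suffices h : ∀ᶠ n : ℕ in atTop,
      x + r n x k ∈ Ico (2 / 3 : ℝ) (5 / 3) → x + r (n + 1) x k ∈ Ico (2 / 3 : ℝ) (5 / 3) by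
    obtain ⟨n₀, hn₀⟩ := eventually_atTop.mp h
    exact ⟨n₀, fun n hn hr => Δfun_eq_of_mem_Ico (by linarith [hx.1]) hr (hn₀ n hn hr)⟩
  rcases lt_or_ge x (2 / 3) with hx23 | hx23
  · have hlim : Tendsto (fun n : ℕ => x + r n x k) atTop (𝓝 x) := by
      simpa using (tendsto_r_atTop x k).const_add x
    filter_upwards [hlim.eventually (gt_mem_nhds hx23)] with n hn hr
    exact absurd hr.1 hn.not_ge
  · refine Eventually.of_forall fun n hr => ?_
    rcases mem_uIcc.mp (r_succ_mem_uIcc (n := n) (by positivity) k) with h | h <;>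
      exact ⟨by linarith [hr.1, h.1, h.2], by linarith [hr.2, h.1, h.2, hx.2]⟩
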